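/- Let D = conv{0, e₁, e₂, e₃} ⊆ ℝ³ be the standard tetrahedron. For every vector t ∈ {0,1}³ \ {0}, there exist two distinct vertices p, q of D and a nonzero vector v in the lattice ℤ³ + ℤ·(t/2) such that the midpoint (p+q)/2 of the edge pq belongs to the translate D + v. -/

import Mathlib

open Pointwise MeasureTheory

/-- The standard basis vector `eᵢ` of `ℝ³`. -/
noncomputable def stdVec (i : Fin 3) : EuclideanSpace ℝ (Fin 3) :=
  EuclideanSpace.single i (1 : ℝ)

/-- The standard tetrahedron `conv {0, e₁, e₂, e₃} ⊆ ℝ³`. -/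
noncomputable def stdTetrahedron : Set (EuclideanSpace ℝ (Fin 3)) :=
  convexHull ℝ {0, stdVec 0, stdVec 1, stdVec 2}

/-- The standard integer lattice `ℤ³ ⊆ ℝ³`, i.e. the `ℤ`-span of the standard basis. -/
noncomputable def intLattice : Submodule ℤ (EuclideanSpace ℝ (Fin 3)) :=
  Submodule.span ℤ (Set.range stdVec)

/-- The lattice `ℤ³ + ℤ·(t/2)` generated by `ℤ³` together with the vector `t/2`. -/
noncomputable def halfLattice (t : EuclideanSpace ℝ (Fin 3)) :
    Submodule ℤ (EuclideanSpace ℝ (Fin 3)) :=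
  intLattice ⊔ Submodule.span ℤ {(1 / 2 : ℝ) • t}

/-! If `t` has at most two nonzero coordinates, then `t = p + q` for two distinct vertices `p, q`,
and `v = t/2` carries the vertex `0` of `D` to the midpoint of `pq`. For `t = e₁ + e₂ + e₃`, the
lattice vector `v = t/2 - e₃ = (1/2, 1/2, -1/2)` carries the point `e₃/2` of `D` to the midpoint of
`e₁e₂`. -/

section Lattice

variable (t : EuclideanSpace ℝ (Fin 3))

lemma stdVec_mem_halfLattice (i : Fin 3) : stdVec i ∈ halfLattice t :=
  Submodule.mem_sup_left (Submodule.subset_span ⟨i, rfl⟩)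

lemma half_smul_mem_halfLattice : (1 / 2 : ℝ) • t ∈ halfLattice t :=
  Submodule.mem_sup_right (Submodule.mem_span_singleton_self _)

end Lattice

lemma stdVec_apply (i j : Fin 3) : stdVec i j = if j = i then 1 else 0 :=
  PiLp.single_apply (𝕜 := ℝ) 2 i 1 j

lemma stdVec_ne_zero (i : Fin 3) : stdVec i ≠ 0 := by
  simp [stdVec]

lemma stdVec_injective : Function.Injective stdVec := fun i j h => by
  simpa [stdVec_apply] using congrArg (· i) h

lemma eq_sum_smul_stdVec (t : EuclideanSpace ℝ (Fin 3)) :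
    t = t 0 • stdVec 0 + t 1 • stdVec 1 + t 2 • stdVec 2 := by
  ext i; fin_cases i <;> simp [stdVec_apply]

lemma zero_mem_stdTetrahedron : (0 : EuclideanSpace ℝ (Fin 3)) ∈ stdTetrahedron :=
  subset_convexHull ℝ _ (by simp)

lemma stdVec_mem_stdTetrahedron (i : Fin 3) : stdVec i ∈ stdTetrahedron :=
  subset_convexHull ℝ _ (by fin_cases i <;> simp)

lemma half_smul_stdVec_mem_stdTetrahedron (i : Fin 3) :
    (1 / 2 : ℝ) • stdVec i ∈ stdTetrahedron :=
  (convex_convexHull ℝ _).smul_mem_of_zero_mem zero_mem_stdTetrahedron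
    (stdVec_mem_stdTetrahedron i) ⟨by norm_num, by norm_num⟩

lemma exists_vertex_add_eq_or_eq_sum_stdVec (t : EuclideanSpace ℝ (Fin 3))
    (ht01 : ∀ i, t i = 0 ∨ t i = 1) (ht0 : t ≠ 0) :
    (∃ p ∈ ({0, stdVec 0, stdVec 1, stdVec 2} : Set (EuclideanSpace ℝ (Fin 3))),
      ∃ q ∈ ({0, stdVec 0, stdVec 1, stdVec 2} : Set (EuclideanSpace ℝ (Fin 3))),
        p ≠ q ∧ p + q = t) ∨ t = stdVec 0 + stdVec 1 + stdVec 2 := by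
  have ht := eq_sum_smul_stdVec t
  have h01 : stdVec 0 ≠ stdVec 1 := stdVec_injective.ne (by decide)
  have h02 : stdVec 0 ≠ stdVec 2 := stdVec_injective.ne (by decide)
  have h12 : stdVec 1 ≠ stdVec 2 := stdVec_injective.ne (by decide)
  rcases ht01 0 with h0 | h0 <;> rcases ht01 1 with h1 | h1 <;> rcases ht01 2 with h2 | h2 <;>
    simp only [h0, h1, h2, zero_smul, one_smul, add_zero, zero_add] at ht <;> subst ht
  · exact absurd rfl ht0
  · exact .inl ⟨0, by simp, stdVec 2, by simp, (stdVec_ne_zero 2).symm, zero_add _⟩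
  · exact .inl ⟨0, by simp, stdVec 1, by simp, (stdVec_ne_zero 1).symm, zero_add _⟩
  · exact .inl ⟨stdVec 1, by simp, stdVec 2, by simp, h12, rfl⟩
  · exact .inl ⟨0, by simp, stdVec 0, by simp, (stdVec_ne_zero 0).symm, zero_add _⟩
  · exact .inl ⟨stdVec 0, by simp, stdVec 2, by simp, h02, rfl⟩
  · exact .inl ⟨stdVec 0, by simp, stdVec 1, by simp, h01, rfl⟩
  · exact .inr rfl

/-- For every `t ∈ {0,1}³ \ {0}`, some edge midpoint `(p+q)/2` of the standard tetrahedron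
`D = conv {0, e₁, e₂, e₃}` belongs to a translate `D + v` of `D` by a nonzero vector `v` of
the lattice `ℤ³ + ℤ·(t/2)`. -/
theorem stmt_17 (t : EuclideanSpace ℝ (Fin 3))
    (ht01 : ∀ i, t i = 0 ∨ t i = 1) (ht0 : t ≠ 0) :
    ∃ p ∈ ({0, stdVec 0, stdVec 1, stdVec 2} : Set (EuclideanSpace ℝ (Fin 3))),
      ∃ q ∈ ({0, stdVec 0, stdVec 1, stdVec 2} : Set (EuclideanSpace ℝ (Fin 3))),
        p ≠ q ∧ ∃ v ∈ halfLattice t, v ≠ 0 ∧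
          (1 / 2 : ℝ) • (p + q) ∈ v +ᵥ stdTetrahedron := by
  rcases exists_vertex_add_eq_or_eq_sum_stdVec t ht01 ht0 with ⟨p, hp, q, hq, hpq, rfl⟩ | rfl
  · refine ⟨p, hp, q, hq, hpq, _, half_smul_mem_halfLattice _, smul_ne_zero (by norm_num) ht0, ?_⟩
    simpa using Set.vadd_mem_vadd_set (a := (1 / 2 : ℝ) • (p + q)) zero_mem_stdTetrahedron
  · set t := stdVec 0 + stdVec 1 + stdVec 2
    refine ⟨stdVec 0, by simp, stdVec 1, by simp, stdVec_injective.ne (by decide),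
      (1 / 2 : ℝ) • t - stdVec 2,
      sub_mem (half_smul_mem_halfLattice t) (stdVec_mem_halfLattice t 2), fun h => ?_, ?_⟩
    · simpa [t, stdVec_apply] using congrArg (· 0) h
    · have : (1 / 2 : ℝ) • (stdVec 0 + stdVec 1)
          = ((1 / 2 : ℝ) • t - stdVec 2) + (1 / 2 : ℝ) • stdVec 2 := by
        simp only [t]; module
      rw [this]
      exact Set.vadd_mem_vadd_set (half_smul_stdVec_mem_stdTetrahedron 2)
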